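/- arXiv:1701.07229 — 4 statements merged into one kernel-verified Lean document; each statement's English description precedes it below -/
import Mathlib

section
/- If Φ : G → B(H) satisfies the μ-cosine equation Φ(x+y) + μ(y)Φ(x−y) = 2Φ(x)Φ(y) for all x,y ∈ G and Φ(0) = I, then the operators Φ(x) pairwise commute: Φ(x)Φ(y) = Φ(y)Φ(x) for all x,y ∈ G. -/
theorem stmt_1 {G : Type*} [AddCommGroup G]
    {H : Type*} [NormedAddCommGroup H] [InnerProductSpace ℂ H]
    (μ : G → ℂ) (hμ : ∀ x y, μ (x + y) = μ x * μ y) (hμ0 : μ 0 = 1)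
    (hμne : ∀ x, μ x ≠ 0)
    (Φ : G → (H →L[ℂ] H))
    (hΦ : ∀ x y, Φ (x + y) + μ y • Φ (x - y) = (2 : ℂ) • (Φ x * Φ y))
    (hΦ0 : Φ 0 = 1) :
    ∀ x y, Φ x * Φ y = Φ y * Φ x := by
  have key : ∀ z, μ z • Φ (-z) = Φ z := by
    intro z
    have h := hΦ 0 z
    simp only [zero_add, zero_sub, hΦ0, one_mul] at h
    have : Φ z + μ z • Φ (-z) = Φ z + Φ z := by
      rw [h]; rw [two_smul]
    exact (add_right_injective (Φ z) this)
  intro x y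
  have h1 := hΦ x y
  have h2 := hΦ y x
  have hfix : μ x • Φ (y - x) = μ y • Φ (x - y) := by
    have : Φ (y - x) = μ (y - x) • Φ (x - y) := by
      have := key (y - x)
      rw [← this]
      congr 1
      abel_nf
    rw [this, smul_smul, ← hμ, add_sub_cancel]
  have h3 : (2 : ℂ) • (Φ x * Φ y) = (2 : ℂ) • (Φ y * Φ x) := by
    rw [← h1, ← h2, add_comm x y, hfix]
  have h2ne : (2 : ℂ) ≠ 0 := two_ne_zero
  exact smul_right_injective _ h2ne h3
end

section
/- Every nonzero solution f : G → ℂ of the μ-cosine equation f(x+y) + μ(y)f(x−y) = 2f(x)f(y) on an abelian group G has the form f(x) = (χ(x) + μ(x)χ(−x))/2 for some character χ : G → ℂ∖{0} of G. -/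
theorem stmt_5 {G : Type*} [AddCommGroup G]
    (μ : G → ℂ) (hμ : ∀ x y, μ (x + y) = μ x * μ y) (hμ0 : μ 0 = 1)
    (hμne : ∀ x, μ x ≠ 0)
    (f : G → ℂ)
    (hf : ∀ x y, f (x + y) + μ y * f (x - y) = 2 * f x * f y)
    (hfne : ∃ x, f x ≠ 0) :
    ∃ χ : G → ℂ, (∀ x y, χ (x + y) = χ x * χ y) ∧ (∀ x, χ x ≠ 0) ∧
      ∀ x, f x = (χ x + μ x * χ (-x)) / 2 := by
  have hinv : ∀ t : G, μ t * μ (-t) = 1 := by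
    intro t; rw [← hμ, add_neg_cancel, hμ0]
  have h0 : f 0 = 1 := by
    have h00 := hf 0 0
    rw [add_zero, sub_zero, hμ0, one_mul] at h00
    have hsplit : f 0 * (f 0 - 1) = 0 := by linear_combination - h00 / 2
    rcases mul_eq_zero.mp hsplit with h | h
    · exfalso
      obtain ⟨x, hx⟩ := hfne
      have hx0 := hf x 0
      rw [add_zero, sub_zero, hμ0, one_mul, h, mul_zero] at hx0
      exact hx (by linear_combination hx0 / 2)
    · linear_combination h
  have hodd : ∀ t : G, μ t * f (-t) = f t := by
    intro t
    have h1 := hf 0 t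
    rw [zero_add, zero_sub, h0] at h1
    linear_combination h1
  -- Kannappan identity
  have star : ∀ x y z : G, f (x + y + z) =
      f (x + y) * f z + f (x + z) * f y + f (y + z) * f x - 2 * f x * f y * f z := by
    intro x y z
    have hB := hf (x + z) y
    rw [show x + z + y = x + y + z by abel, show x + z - y = x - y + z by abel] at hB
    have hC := hf (y + z) x
    rw [show y + z + x = x + y + z by abel] at hC
    have hD := hf x y
    have hE := hf (x - y) z
    have hF : μ x * f (y + z - x) = μ y * μ z * f (x - y - z) := by
      have h1 := hodd (y + z - x)
      rw [show -(y + z - x) = x - y - z by abel] at h1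
      have c : μ x * μ (y + z - x) = μ y * μ z := by
        rw [← hμ, show x + (y + z - x) = y + z by abel, hμ]
      linear_combination f (x - y - z) * c - μ x * h1
    linear_combination (hB + hC - 2 * f z * hD - μ y * hE - hF) / 2
  -- rank one identity (in "2g" form)
  have rank1' : ∀ x y u v : G,
      (f (x + y) - μ y * f (x - y)) * (f (u + v) - μ v * f (u - v)) =
      (f (x + v) - μ v * f (x - v)) * (f (u + y) - μ y * f (u - y)) := by
    intro x y u v
    have cv : μ v * μ (u - v) = μ u := by
      rw [sub_eq_add_neg, hμ]; linear_combination μ u * hinv v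
    have cy : μ y * μ (u - y) = μ u := by
      rw [sub_eq_add_neg, hμ]; linear_combination μ u * hinv y
    have h1 := hf (x + y) (u + v)
    rw [show x + y + (u + v) = x + y + u + v by abel,
        show x + y - (u + v) = x + y - u - v by abel, hμ u v] at h1
    have h2 := hf (x + y) (u - v)
    rw [show x + y + (u - v) = x + y + u - v by abel,
        show x + y - (u - v) = x + y - u + v by abel] at h2
    have h2' : μ v * f (x + y + u - v) + μ u * f (x + y - u + v)
        = 2 * μ v * (f (x + y) * f (u - v)) := by
      linear_combination μ v * h2 - f (x + y - u + v) * cv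
    have h3 := hf (x - y) (u + v)
    rw [show x - y + (u + v) = x - y + u + v by abel,
        show x - y - (u + v) = x - y - u - v by abel, hμ u v] at h3
    have h4 := hf (x - y) (u - v)
    rw [show x - y + (u - v) = x - y + u - v by abel,
        show x - y - (u - v) = x - y - u + v by abel] at h4
    have h4' : μ v * f (x - y + u - v) + μ u * f (x - y - u + v)
        = 2 * μ v * (f (x - y) * f (u - v)) := by
      linear_combination μ v * h4 - f (x - y - u + v) * cv
    have h5 := hf (x + v) (u + y)
    rw [show x + v + (u + y) = x + y + u + v by abel,
        show x + v - (u + y) = x - y - u + v by abel, hμ u y] at h5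
    have h6 := hf (x + v) (u - y)
    rw [show x + v + (u - y) = x - y + u + v by abel,
        show x + v - (u - y) = x + y - u + v by abel] at h6
    have h6' : μ y * f (x - y + u + v) + μ u * f (x + y - u + v)
        = 2 * μ y * (f (x + v) * f (u - y)) := by
      linear_combination μ y * h6 - f (x + y - u + v) * cy
    have h7 := hf (x - v) (u + y)
    rw [show x - v + (u + y) = x + y + u - v by abel,
        show x - v - (u + y) = x - y - u - v by abel, hμ u y] at h7
    have h8 := hf (x - v) (u - y)
    rw [show x - v + (u - y) = x - y + u - v by abel,
        show x - v - (u - y) = x + y - u - v by abel] at h8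
    have h8' : μ y * f (x - y + u - v) + μ u * f (x + y - u - v)
        = 2 * μ y * (f (x - v) * f (u - y)) := by
      linear_combination μ y * h8 - f (x + y - u - v) * cy
    linear_combination (- h1 + h2' + μ y * h3 - μ y * h4' + h5 - h6' - μ v * h7 + μ v * h8') / 2
  have hg2 : ∀ a b : G, 2 * (f (a + b) - f a * f b) = f (a + b) - μ b * f (a - b) := by
    intro a b; linear_combination hf a b
  have rank1 : ∀ x y u v : G,
      (f (x + y) - f x * f y) * (f (u + v) - f u * f v) =
      (f (x + v) - f x * f v) * (f (u + y) - f u * f y) := by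
    intro x y u v
    have h := rank1' x y u v
    rw [← hg2 x y, ← hg2 u v, ← hg2 x v, ← hg2 u y] at h
    linear_combination h / 4
  by_cases hall : ∀ a b : G, f (a + b) = f a * f b
  · refine ⟨f, hall, ?_, ?_⟩
    · intro x
      have h1 := hall x (-x)
      rw [add_neg_cancel, h0] at h1
      exact left_ne_zero_of_mul_eq_one h1.symm
    · intro x
      rw [hodd x]; ring
  · push_neg at hall
    obtain ⟨a, b, hab⟩ := hall
    have hab' : f (a + b) - f a * f b ≠ 0 := sub_ne_zero_of_ne hab
    have huu : f (a + a) - f a * f a ≠ 0 := by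
      have hr := rank1 a b b a
      rw [add_comm b a] at hr
      intro h
      rw [h, zero_mul] at hr
      have hr' : (f (a + b) - f a * f b) * (f (a + b) - f a * f b) = 0 := by
        linear_combination hr
      exact hab' (mul_self_eq_zero.mp hr')
    obtain ⟨β, hβ⟩ := IsAlgClosed.exists_pow_nat_eq (k := ℂ) (f (a + a) - f a * f a)
      (n := 2) (by norm_num)
    have hβ' : β * β = f (a + a) - f a * f a := by rw [← hβ]; ring
    have hβ0 : β ≠ 0 := by
      intro h; rw [h, mul_zero] at hβ'; exact huu hβ'.symm
    have key : ∀ x y : G, (f (x + y) - f x * f y) * (f (a + a) - f a * f a)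
        = (f (x + a) - f x * f a) * (f (y + a) - f y * f a) := by
      intro x y
      have h := rank1 x y a a
      rw [add_comm a y] at h
      linear_combination h
    have padd : ∀ x y : G, f (x + y + a) - f (x + y) * f a
        = (f (x + a) - f x * f a) * f y + f x * (f (y + a) - f y * f a) := by
      intro x y
      linear_combination star x y a
    have nodd : ∀ x : G, μ x * (f (-x + a) - f (-x) * f a)
        = -(f (x + a) - f x * f a) := by
      intro x
      have e1 : f (-x + a) = μ (-x + a) * f (x - a) := by
        have h1 := hodd (-x + a)
        rw [show -(-x + a) = x - a by abel] at h1
        exact h1.symm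
      have e2 : f (-x) = μ (-x) * f x := by
        have h1 := hodd (-x)
        rw [neg_neg] at h1
        exact h1.symm
      have c1 : μ x * μ (-x + a) = μ a := by
        rw [← hμ, show x + (-x + a) = a by abel]
      have c2 : μ x * μ (-x) = 1 := hinv x
      linear_combination hf x a + μ x * e1 - μ x * f a * e2 + f (x - a) * c1
        - f x * f a * c2
    have hmul : ∀ x y : G, f (x + y) + (f (x + y + a) - f (x + y) * f a) / β
        = (f x + (f (x + a) - f x * f a) / β) * (f y + (f (y + a) - f y * f a) / β) := by
      intro x y
      have hL : f (x + y) + (f (x + y + a) - f (x + y) * f a) / β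
          = (β * β * f (x + y) + β * (f (x + y + a) - f (x + y) * f a)) / (β * β) := by
        field_simp
      have hR : (f x + (f (x + a) - f x * f a) / β) * (f y + (f (y + a) - f y * f a) / β)
          = (β * β * (f x * f y)
              + β * (f x * (f (y + a) - f y * f a) + f y * (f (x + a) - f x * f a))
              + (f (x + a) - f x * f a) * (f (y + a) - f y * f a)) / (β * β) := by
        field_simp; ring
      rw [hL, hR]
      congr 1
      linear_combination β * padd x y + key x y + (f (x + y) - f x * f y) * hβ'
    refine ⟨fun x => f x + (f (x + a) - f x * f a) / β, hmul, ?_, ?_⟩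
    · have h1 : f 0 + (f (0 + a) - f 0 * f a) / β = 1 := by
        rw [zero_add, h0, one_mul, sub_self, zero_div, add_zero]
      intro x
      have h2 := hmul x (-x)
      rw [add_neg_cancel, h1] at h2
      exact left_ne_zero_of_mul_eq_one h2.symm
    · intro x
      show f x = (f x + (f (x + a) - f x * f a) / β
        + μ x * (f (-x) + (f (-x + a) - f (-x) * f a) / β)) / 2
      rw [mul_add, hodd x, ← mul_div_assoc, nodd x]
      ring
end

section
/- Let Φ : G → B(H) satisfy the μ-cosine equation with Φ(0) = I and Φ(x)* = Φ(−x), fix ξ ∈ H and set f(x) := ⟨Φ(x)ξ, ξ⟩ and K_f(x,y) := (1/2)(f(−y+x) + μ(x)f(−y−x)). Then K_f(x,y) = ⟨Φ(x)ξ, Φ(y)ξ⟩ for all x,y ∈ G. -/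
/-!
Hermitian symmetry `Φ(y)* = Φ(-y)` moves `Φ y` across the inner product, turning
`⟨Φ(x)ξ, Φ(y)ξ⟩` into `⟨Φ(-y)Φ(x)ξ, ξ⟩`, and the cosine equation at `(-y, x)` rewrites the
product `Φ(-y)Φ(x)` as `(Φ(-y+x) + μ(x) Φ(-y-x)) / 2`.
-/

theorem mul_eq_half_smul_of_cosine {G A : Type*} [AddCommGroup G] [Ring A] [Module ℂ A]
    {μ : G → ℂ} {Φ : G → A}
    (hΦ : ∀ x y, Φ (x + y) + μ y • Φ (x - y) = (2 : ℂ) • (Φ x * Φ y)) (x y : G) :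
    Φ x * Φ y = (1 / 2 : ℂ) • (Φ (x + y) + μ y • Φ (x - y)) := by
  rw [hΦ, smul_smul]
  norm_num

theorem inner_apply_left_eq_of_adjoint_eq_neg {G H : Type*} [AddCommGroup G]
    [NormedAddCommGroup H] [InnerProductSpace ℂ H] [CompleteSpace H] {Φ : G → (H →L[ℂ] H)}
    (hherm : ∀ x, ContinuousLinearMap.adjoint (Φ x) = Φ (-x)) (y : G) (ξ η : H) :
    inner ℂ (Φ y ξ) η = inner ℂ ξ (Φ (-y) η) := by
  rw [← ContinuousLinearMap.adjoint_inner_left, hherm, neg_neg]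

theorem stmt_9_general {G : Type*} [AddCommGroup G]
    {H : Type*} [NormedAddCommGroup H] [InnerProductSpace ℂ H] [CompleteSpace H]
    (μ : G → ℂ)
    (Φ : G → (H →L[ℂ] H))
    (hΦ : ∀ x y, Φ (x + y) + μ y • Φ (x - y) = (2 : ℂ) • (Φ x * Φ y))
    (hherm : ∀ x, ContinuousLinearMap.adjoint (Φ x) = Φ (-x))
    (ξ : H) (f : G → ℂ) (hf : ∀ x, f x = inner ℂ ξ (Φ x ξ))
    (K : G → G → ℂ)
    (hK : ∀ x y, K x y = (1 / 2 : ℂ) * (f (-y + x) + μ x * f (-y - x))) :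
    ∀ x y, K x y = inner ℂ (Φ y ξ) (Φ x ξ) := by
  intro x y
  rw [inner_apply_left_eq_of_adjoint_eq_neg hherm, ← mul_apply_eq_comp,
    mul_eq_half_smul_of_cosine hΦ, hK, hf, hf]
  simp only [smul_apply, add_apply, inner_smul_right, inner_add_right]

theorem stmt_9 {G : Type*} [AddCommGroup G]
    {H : Type*} [NormedAddCommGroup H] [InnerProductSpace ℂ H] [CompleteSpace H]
    (μ : G → ℂ) (hμ : ∀ x y, μ (x + y) = μ x * μ y) (hμ0 : μ 0 = 1)
    (hμne : ∀ x, μ x ≠ 0)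
    (Φ : G → (H →L[ℂ] H))
    (hΦ : ∀ x y, Φ (x + y) + μ y • Φ (x - y) = (2 : ℂ) • (Φ x * Φ y))
    (hΦ0 : Φ 0 = 1)
    (hherm : ∀ x, ContinuousLinearMap.adjoint (Φ x) = Φ (-x))
    (ξ : H) (f : G → ℂ) (hf : ∀ x, f x = inner ℂ ξ (Φ x ξ))
    (K : G → G → ℂ)
    (hK : ∀ x y, K x y = (1 / 2 : ℂ) * (f (-y + x) + μ x * f (-y - x))) :
    ∀ x y, K x y = inner ℂ (Φ y ξ) (Φ x ξ) :=
  stmt_9_general μ Φ hΦ hherm ξ f hf K hK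
end

section
/- Let Φ : G → B(H) satisfy the μ-cosine equation with Φ(0) = I and Φ(x)* = Φ(−x), fix ξ ∈ H, and set f(x) := ⟨Φ(x)ξ, ξ⟩, K_f(x,y) := (1/2)(f(−y+x) + μ(x)f(−y−x)). Then K_f is a positive definite kernel: for all n, x₁,…,xₙ ∈ G and c₁,…,cₙ ∈ ℂ, ∑ᵢ∑ⱼ cᵢ conj(cⱼ) K_f(xᵢ,xⱼ) ≥ 0 (in particular it is real). -/
open scoped ComplexOrder

/-! The identity `Φ(-y) Φ(x) = ½ (Φ(-y + x) + μ(x) Φ(-y - x))` together with `Φ(y)* = Φ(-y)` gives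
`K_f(x, y) = ⟪Φ(y) ξ, Φ(x) ξ⟫`, so `K_f` is a Gram kernel and
`∑ᵢ∑ⱼ cᵢ conj(cⱼ) K_f(xᵢ, xⱼ) = ‖∑ᵢ cᵢ Φ(xᵢ) ξ‖²`. -/

theorem sum_sum_mul_conj_mul_inner_nonneg {𝕜 E ι : Type*} [RCLike 𝕜] [SeminormedAddCommGroup E]
    [InnerProductSpace 𝕜 E] (s : Finset ι) (v : ι → E) (c : ι → 𝕜) :
    0 ≤ ∑ i ∈ s, ∑ j ∈ s, c i * starRingEnd 𝕜 (c j) * inner 𝕜 (v j) (v i) := by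
  have hgram : ∑ i ∈ s, ∑ j ∈ s, c i * starRingEnd 𝕜 (c j) * inner 𝕜 (v j) (v i)
      = inner 𝕜 (∑ j ∈ s, c j • v j) (∑ i ∈ s, c i • v i) := by
    simp only [sum_inner, inner_sum, inner_smul_left, inner_smul_right, Finset.mul_sum]
    exact Finset.sum_congr rfl fun _ _ => Finset.sum_congr rfl fun _ _ => by ring
  rw [hgram, inner_self_eq_norm_sq_to_K]
  positivity

theorem inner_apply_eq_of_cosine {G H : Type*} [AddCommGroup G] [NormedAddCommGroup H]
    [InnerProductSpace ℂ H] [CompleteSpace H] {μ : G → ℂ} {Φ : G → (H →L[ℂ] H)}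
    (hΦ : ∀ x y, Φ (x + y) + μ y • Φ (x - y) = (2 : ℂ) • (Φ x * Φ y))
    (hherm : ∀ x, ContinuousLinearMap.adjoint (Φ x) = Φ (-x)) (ξ : H) (x y : G) :
    inner ℂ (Φ y ξ) (Φ x ξ)
      = (1 / 2 : ℂ) * (inner ℂ ξ (Φ (-y + x) ξ) + μ x * inner ℂ ξ (Φ (-y - x) ξ)) := by
  have hcos : Φ (-y + x) ξ + μ x • Φ (-y - x) ξ = (2 : ℂ) • Φ (-y) (Φ x ξ) :=
    congrArg (fun T : H →L[ℂ] H => T ξ) (hΦ (-y) x)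
  rw [← inner_smul_right, ← inner_add_right, hcos, inner_smul_right, ← hherm y,
    ContinuousLinearMap.adjoint_inner_right]
  ring

theorem stmt_10_general {G : Type*} [AddCommGroup G]
    {H : Type*} [NormedAddCommGroup H] [InnerProductSpace ℂ H] [CompleteSpace H]
    (μ : G → ℂ)
    (Φ : G → (H →L[ℂ] H))
    (hΦ : ∀ x y, Φ (x + y) + μ y • Φ (x - y) = (2 : ℂ) • (Φ x * Φ y))
    (hherm : ∀ x, ContinuousLinearMap.adjoint (Φ x) = Φ (-x))
    (ξ : H) (f : G → ℂ) (hf : ∀ x, f x = inner ℂ ξ (Φ x ξ))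
    (K : G → G → ℂ)
    (hK : ∀ x y, K x y = (1 / 2 : ℂ) * (f (-y + x) + μ x * f (-y - x))) :
    ∀ (n : ℕ) (x : Fin n → G) (c : Fin n → ℂ),
      0 ≤ ∑ i, ∑ j, c i * (starRingEnd ℂ) (c j) * K (x i) (x j) := by
  intro n x c
  have hgram : ∀ a b, K a b = inner ℂ (Φ b ξ) (Φ a ξ) := fun a b => by
    rw [hK, hf, hf, inner_apply_eq_of_cosine hΦ hherm]
  simp only [hgram]
  exact sum_sum_mul_conj_mul_inner_nonneg _ (fun i => Φ (x i) ξ) c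

theorem stmt_10 {G : Type*} [AddCommGroup G]
    {H : Type*} [NormedAddCommGroup H] [InnerProductSpace ℂ H] [CompleteSpace H]
    (μ : G → ℂ) (hμ : ∀ x y, μ (x + y) = μ x * μ y) (hμ0 : μ 0 = 1)
    (hμne : ∀ x, μ x ≠ 0)
    (Φ : G → (H →L[ℂ] H))
    (hΦ : ∀ x y, Φ (x + y) + μ y • Φ (x - y) = (2 : ℂ) • (Φ x * Φ y))
    (hΦ0 : Φ 0 = 1)
    (hherm : ∀ x, ContinuousLinearMap.adjoint (Φ x) = Φ (-x))
    (ξ : H) (f : G → ℂ) (hf : ∀ x, f x = inner ℂ ξ (Φ x ξ))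
    (K : G → G → ℂ)
    (hK : ∀ x y, K x y = (1 / 2 : ℂ) * (f (-y + x) + μ x * f (-y - x))) :
    ∀ (n : ℕ) (x : Fin n → G) (c : Fin n → ℂ),
      0 ≤ ∑ i, ∑ j, c i * (starRingEnd ℂ) (c j) * K (x i) (x j) :=
  stmt_10_general μ Φ hΦ hherm ξ f hf K hK
end
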